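/- Let L > 0 and η = 1/(8L). Let f : X → (0,1) and h : X → ℝ be measurable with |η·h(x)| ≤ 1 for all x, with ℓ_D(f;y) finite, with E[h(x)²] ≤ L·ℓ_D(f;y), and with E[h(x)·(f(x) − y(x))] ≥ (1/4)·ℓ_D(f;y). Let f' be the multiplicative-weights update of f by h with step η, and assume ℓ_D(f';y) is finite. Then ℓ_D(f';y) ≤ (1 − 1/(64L))·ℓ_D(f;y). -/

import Mathlib

/-!
With `Z = 1 - f + f e^{-t}`, the loss of the updated prediction is exactly `ℓ + y t + log Z`, and
`log Z ≤ Z - 1 ≤ -f t + t²` because `e^{-t} ≤ 1 - t + t²` for `|t| ≤ 1`. Taking `t = η h` and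
integrating, the correlation and second-moment hypotheses bound the new loss by
`(1 - η/4 + η² L) ℓ`, which is `(1 - 1/(64L)) ℓ` at `η = 1/(8L)`.
-/

open MeasureTheory Real

theorem integral_le_sub_mul_add_mul {X : Type*} [MeasurableSpace X] {μ : Measure X}
    {g ℓ c q : X → ℝ} {a b : ℝ} (hg : Integrable g μ) (hℓ : Integrable ℓ μ)
    (hc : Integrable c μ) (hq : Integrable q μ) (hle : ∀ x, g x ≤ ℓ x - a * c x + b * q x) :
    ∫ x, g x ∂μ ≤ ∫ x, ℓ x ∂μ - a * ∫ x, c x ∂μ + b * ∫ x, q x ∂μ := by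
  have hℓc : Integrable (fun x => ℓ x - a * c x) μ := hℓ.sub (hc.const_mul a)
  calc ∫ x, g x ∂μ ≤ ∫ x, (ℓ x - a * c x + b * q x) ∂μ :=
        integral_mono hg (hℓc.add (hq.const_mul b)) hle
    _ = _ := by
      rw [integral_add hℓc (hq.const_mul b), integral_sub hℓ (hc.const_mul a),
        integral_const_mul, integral_const_mul]

namespace Real

theorem one_sub_add_mul_exp_pos {p : ℝ} (hp0 : 0 ≤ p) (hp1 : p ≤ 1) (s : ℝ) :
    0 < 1 - p + p * exp s := by
  rcases hp0.eq_or_lt with rfl | hp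
  · simp
  · exact add_pos_of_nonneg_of_pos (sub_nonneg.2 hp1) (by positivity)

theorem log_one_sub_add_mul_exp_neg_le {p t : ℝ} (hp0 : 0 ≤ p) (hp1 : p ≤ 1) (ht : |t| ≤ 1) :
    log (1 - p + p * exp (-t)) ≤ -(p * t) + t ^ 2 := by
  have hexp : exp (-t) ≤ 1 - t + t ^ 2 := by
    have := (abs_le.mp (abs_exp_sub_one_sub_id_le (x := -t) (by rwa [abs_neg]))).2
    linarith [neg_sq t]
  calc log (1 - p + p * exp (-t))
      ≤ 1 - p + p * exp (-t) - 1 := log_le_sub_one_of_pos (one_sub_add_mul_exp_pos hp0 hp1 _)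
    _ ≤ p * (-t + t ^ 2) := by nlinarith
    _ ≤ -(p * t) + t ^ 2 := by nlinarith [sq_nonneg t]

end Real

noncomputable def crossEntropy (y p : ℝ) : ℝ := -y * log p - (1 - y) * log (1 - p)

noncomputable def mwUpdate (p t : ℝ) : ℝ := p * exp (-t) / (1 - p + p * exp (-t))

theorem crossEntropy_mwUpdate (y : ℝ) {p : ℝ} (hp : p ∈ Set.Ioo (0 : ℝ) 1) (t : ℝ) :
    crossEntropy y (mwUpdate p t) = crossEntropy y p + y * t + log (1 - p + p * exp (-t)) := by
  obtain ⟨hp0, hp1⟩ := hp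
  have hZ := one_sub_add_mul_exp_pos hp0.le hp1.le (-t)
  have hcompl : 1 - mwUpdate p t = (1 - p) / (1 - p + p * exp (-t)) := by
    rw [mwUpdate]; field_simp; ring
  rw [crossEntropy, crossEntropy, hcompl, mwUpdate, log_div (by positivity) hZ.ne',
    log_mul hp0.ne' (exp_pos _).ne', log_exp, log_div (by linarith) hZ.ne']
  ring

theorem crossEntropy_mwUpdate_le (y : ℝ) {p t : ℝ} (hp : p ∈ Set.Ioo (0 : ℝ) 1) (ht : |t| ≤ 1) :
    crossEntropy y (mwUpdate p t) ≤ crossEntropy y p - t * (p - y) + t ^ 2 := by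
  rw [crossEntropy_mwUpdate y hp]
  linarith [log_one_sub_add_mul_exp_neg_le hp.1.le hp.2.le ht]

/-- One step of the multiplicative-weights update with a learned gradient shrinks
the expected cross-entropy loss by a factor `1 - 1/(64L)`. -/
theorem mw_gradient_step_contraction
    {X : Type*} [MeasurableSpace X] (D : Measure X) [IsProbabilityMeasure D]
    (y : X → ℝ) (hy : Measurable y) (hy01 : ∀ x, y x = 0 ∨ y x = 1)
    (L η : ℝ) (hL : 0 < L) (hη : η = 1 / (8 * L))
    (f h : X → ℝ) (hf : Measurable f) (hf01 : ∀ x, f x ∈ Set.Ioo (0 : ℝ) 1)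
    (hh : Measurable h) (hηh : ∀ x, |η * h x| ≤ 1)
    (hℓf : Integrable (fun x => -(y x) * Real.log (f x) - (1 - y x) * Real.log (1 - f x)) D)
    (hh2 : ∫ x, (h x)^2 ∂D
      ≤ L * ∫ x, (-(y x) * Real.log (f x) - (1 - y x) * Real.log (1 - f x)) ∂D)
    (hcorr : ∫ x, h x * (f x - y x) ∂D
      ≥ (1/4) * ∫ x, (-(y x) * Real.log (f x) - (1 - y x) * Real.log (1 - f x)) ∂D)
    (f' : X → ℝ)
    (hf' : ∀ x, f' x = f x * Real.exp (-η * h x) / (1 - f x + f x * Real.exp (-η * h x)))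
    (hℓf' : Integrable (fun x => -(y x) * Real.log (f' x) - (1 - y x) * Real.log (1 - f' x)) D) :
    ∫ x, (-(y x) * Real.log (f' x) - (1 - y x) * Real.log (1 - f' x)) ∂D
      ≤ (1 - 1 / (64 * L))
        * ∫ x, (-(y x) * Real.log (f x) - (1 - y x) * Real.log (1 - f x)) ∂D := by
  have hη0 : 0 < η := hη ▸ by positivity
  have hh_le : ∀ x, |h x| ≤ 1 / η := fun x =>
    (le_div_iff₀ hη0).2 (by simpa [abs_mul, abs_of_pos hη0, mul_comm] using hηh x)
  have hfy_le : ∀ x, |f x - y x| ≤ 1 := fun x => by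
    obtain ⟨hf0, hf1⟩ := hf01 x
    rcases hy01 x with hyx | hyx <;> rw [hyx, abs_le] <;> constructor <;> linarith
  have hint_sq : Integrable (fun x => h x ^ 2) D :=
    .of_bound (hh.pow_const 2).aestronglyMeasurable ((1 / η) ^ 2) (ae_of_all _ fun x => by
      simpa [abs_pow] using pow_le_pow_left₀ (abs_nonneg _) (hh_le x) 2)
  have hint_corr : Integrable (fun x => h x * (f x - y x)) D :=
    .of_bound (hh.mul (hf.sub hy)).aestronglyMeasurable (1 / η) (ae_of_all _ fun x => by
      simpa [abs_mul] using mul_le_mul (hh_le x) (hfy_le x) (abs_nonneg _) (by positivity))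
  have hpoint : ∀ x, crossEntropy (y x) (f' x)
      ≤ crossEntropy (y x) (f x) - η * (h x * (f x - y x)) + η ^ 2 * h x ^ 2 := fun x => by
    have hupd : f' x = mwUpdate (f x) (η * h x) := by rw [hf' x, mwUpdate, neg_mul]
    rw [hupd]
    linarith [crossEntropy_mwUpdate_le (y x) (hf01 x) (hηh x)]
  set ℓ := ∫ x, (-(y x) * Real.log (f x) - (1 - y x) * Real.log (1 - f x)) ∂D
  calc _ ≤ ℓ - η * ∫ x, h x * (f x - y x) ∂D + η ^ 2 * ∫ x, h x ^ 2 ∂D :=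
        integral_le_sub_mul_add_mul hℓf' hℓf hint_corr hint_sq hpoint
    _ ≤ ℓ - η * (1 / 4 * ℓ) + η ^ 2 * (L * ℓ) := by gcongr
    _ = (1 - 1 / (64 * L)) * ℓ := by subst hη; field_simp; ring
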